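/- Every down-left graph G(m,n,a,b) is well-covered: all of its maximal independent sets have the same cardinality. -/

import Mathlib

/-- The graph `G(m,n)`: vertices are pairs `(i,j)` (0-indexed, corresponding to
`x_{i+1,j+1}`), and `x_{i,j} ~ x_{k,l}` iff (`i < k` and `j > l`) or (`i > k` and `j < l`). -/
def gridGraph (m n : ℕ) : SimpleGraph (Fin m × Fin n) where
  Adj u v := (u.1 < v.1 ∧ v.2 < u.2) ∨ (v.1 < u.1 ∧ u.2 < v.2)
  symm := ⟨fun u v h => Or.symm h⟩
  loopless := ⟨fun u h => by rcases h with ⟨h, -⟩ | ⟨h, -⟩ <;> exact absurd h (lt_irrefl _)⟩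

/-- `W` is an independent set of the induced subgraph of `G` on `A`. -/
def IndepOn {V : Type*} (G : SimpleGraph V) (A W : Set V) : Prop :=
  W ⊆ A ∧ ∀ u ∈ W, ∀ v ∈ W, ¬ G.Adj u v

/-- `W` is a maximal independent set of the induced subgraph of `G` on `A`. -/
def MaxIndepOn {V : Type*} (G : SimpleGraph V) (A W : Set V) : Prop :=
  IndepOn G A W ∧ ∀ W', IndepOn G A W' → W ⊆ W' → W' = W


/-!
An independent set of `gridGraph m n` is a chain for the product order of rows and columns, and
the vertex set `A` of a down-left graph is a staircase: with a cell `p` and a cell `q` below and to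
the left of it, `A` contains the whole rectangle they span. Extending a chain `W` one cell at a
time shows that a maximal one meets every nonempty row and every nonempty column of `A`, and that
when a row shares a column of `A` with an earlier row, its first cell in `W` lies directly below
another cell of `W`. Sorting the cells of `W` into those that come first in their column and those
that do not then gives
`|W| = #(nonempty columns of A) + #(rows of A sharing a column with an earlier row)`,
a number that depends on `A` only.
-/

open Set

theorem gridGraph_adj {m n : ℕ} {u v : Fin m × Fin n} :
    (gridGraph m n).Adj u v ↔ (u.1 < v.1 ∧ v.2 < u.2) ∨ (v.1 < u.1 ∧ u.2 < v.2) :=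
  Iff.rfl

def gridGraphTranspose (m n : ℕ) : gridGraph m n ≃g gridGraph n m where
  toEquiv := Equiv.prodComm _ _
  map_rel_iff' := by
    intro u v
    simp only [Equiv.prodComm_apply, gridGraph_adj, Prod.fst_swap, Prod.snd_swap]
    tauto

section IndepOn

variable {V V' : Type*} {G : SimpleGraph V} {G' : SimpleGraph V'} {A W : Set V}

theorem IndepOn.image (e : G ≃g G') (h : IndepOn G A W) : IndepOn G' (e '' A) (e '' W) := by
  refine ⟨image_mono h.1, ?_⟩
  rintro _ ⟨u, hu, rfl⟩ _ ⟨v, hv, rfl⟩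
  rw [e.map_adj_iff]
  exact h.2 u hu v hv

theorem MaxIndepOn.image (e : G ≃g G') (h : MaxIndepOn G A W) :
    MaxIndepOn G' (e '' A) (e '' W) := by
  refine ⟨h.1.image e, fun W' hW' hsub => ?_⟩
  have hback : e.symm '' W' = W := by
    refine h.2 _ ?_ ?_
    · simpa only [image_image, RelIso.symm_apply_apply, image_id'] using hW'.image e.symm
    · simpa only [image_image, RelIso.symm_apply_apply, image_id'] using
        image_mono (f := e.symm) hsub
  rw [← hback, image_image]
  simp only [RelIso.apply_symm_apply, image_id']

theorem MaxIndepOn.mem_of_forall_not_adj (h : MaxIndepOn G A W) {v : V} (hv : v ∈ A)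
    (hvW : ∀ w ∈ W, ¬ G.Adj v w) : v ∈ W := by
  have hins : IndepOn G A (insert v W) := by
    refine ⟨insert_subset hv h.1.1, ?_⟩
    rintro u (rfl | hu) w (rfl | hw)
    · exact G.loopless.irrefl _
    · exact hvW w hw
    · exact fun huw => hvW u hu huw.symm
    · exact h.1.2 u hu w hw
  rw [← h.2 _ hins (subset_insert v W)]
  exact mem_insert v W

end IndepOn

theorem monotoneOn_Icc_of_le_add_one {f : ℕ → ℕ} {m : ℕ}
    (hf : ∀ i, 1 ≤ i → i < m → f i ≤ f (i + 1)) : MonotoneOn f (Icc 1 m) :=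
  monotoneOn_of_le_succ ordConnected_Icc fun i _ hi hi' => by
    simpa only [Order.succ_eq_add_one] using hf i hi.1 (Nat.lt_of_succ_le hi'.2)

section Staircase

variable {m n : ℕ} {A W : Set (Fin m × Fin n)}

def IsStaircase (A : Set (Fin m × Fin n)) : Prop :=
  ∀ ⦃p q r : Fin m × Fin n⦄, p ∈ A → q ∈ A →
    p.1 ≤ r.1 → r.1 ≤ q.1 → q.2 ≤ r.2 → r.2 ≤ p.2 → r ∈ A

theorem isStaircase_setOf {a b : ℕ → ℕ} (ha : MonotoneOn a (Icc 1 m))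
    (hb : MonotoneOn b (Icc 1 m)) :
    IsStaircase {p : Fin m × Fin n |
      a (p.1.1 + 1) < p.2.1 + 1 ∧ p.2.1 + 1 < b (p.1.1 + 1)} := by
  rintro p q r ⟨-, hpb⟩ ⟨hqa, -⟩ hpr hrq hqr hrp
  have hmem : ∀ i : Fin m, i.1 + 1 ∈ Icc 1 m := fun i => ⟨by omega, i.2⟩
  have har := ha (hmem r.1) (hmem q.1) (Nat.succ_le_succ hrq)
  have hbr := hb (hmem p.1) (hmem r.1) (Nat.succ_le_succ hpr)
  have : q.2.1 ≤ r.2.1 := hqr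
  have : r.2.1 ≤ p.2.1 := hrp
  constructor <;> omega

theorem IsStaircase.image_transpose (hA : IsStaircase A) :
    IsStaircase (gridGraphTranspose m n '' A) := by
  rintro _ _ r ⟨p, hp, rfl⟩ ⟨q, hq, rfl⟩ hpr hrq hqr hrp
  exact ⟨r.swap, hA hq hp hqr hrp hpr hrq, rfl⟩

theorem IndepOn.snd_le_of_fst_lt (hW : IndepOn (gridGraph m n) A W) {p q : Fin m × Fin n}
    (hp : p ∈ W) (hq : q ∈ W) (h : p.1 < q.1) : p.2 ≤ q.2 :=
  not_lt.1 fun h' => hW.2 p hp q hq (Or.inl ⟨h, h'⟩)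

theorem MaxIndepOn.exists_mem_row (hW : MaxIndepOn (gridGraph m n) A W) (hA : IsStaircase A)
    {i : Fin m} {c : Fin n} (hc : (i, c) ∈ A) : ∃ c', (i, c') ∈ W := by
  obtain ⟨cmax, hcmax, hcmax_ge⟩ := exists_max_image {c | (i, c) ∈ A} id (toFinite _) ⟨c, hc⟩
  set T := {c | (i, c) ∈ A ∧ ∀ q ∈ W, ¬ (q.1 < i ∧ c < q.2)}
  have hcmaxT : cmax ∈ T := ⟨hcmax, fun q hq ⟨hqi, hcq⟩ =>
    (hcmax_ge q.2 (hA (hW.1.1 hq) hcmax hqi.le le_rfl hcq.le le_rfl)).not_gt hcq⟩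
  -- The leftmost cell of row `i` with no cell of `W` above and to the right of it is free.
  obtain ⟨c₀, ⟨hc₀A, hc₀T⟩, hc₀_le⟩ := exists_min_image T id (toFinite _) ⟨cmax, hcmaxT⟩
  refine ⟨c₀, hW.mem_of_forall_not_adj hc₀A ?_⟩
  rintro ⟨k, f⟩ hkf (⟨hik, hfc⟩ | ⟨hki, hcf⟩)
  · have hfA : (i, f) ∈ A := hA hc₀A (hW.1.1 hkf) le_rfl hik.le le_rfl hfc.le
    have hfT : f ∉ T := fun hf => (hc₀_le f hf).not_gt hfc
    simp only [T, mem_ofPred_eq, hfA, true_and, not_forall, not_not] at hfT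
    obtain ⟨q, hq, hqi, hfq⟩ := hfT
    exact hW.1.2 q hq (k, f) hkf (Or.inl ⟨hqi.trans hik, hfq⟩)
  · exact hc₀T (k, f) hkf ⟨hki, hcf⟩

theorem MaxIndepOn.exists_mem_col (hW : MaxIndepOn (gridGraph m n) A W) (hA : IsStaircase A)
    {i : Fin m} {j : Fin n} (hj : (i, j) ∈ A) : ∃ i', (i', j) ∈ W := by
  obtain ⟨_, ⟨i', j'⟩, hp, h⟩ :=
    (hW.image (gridGraphTranspose m n)).exists_mem_row hA.image_transpose (mem_image_of_mem _ hj)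
  obtain ⟨rfl, -⟩ := Prod.ext_iff.1 h
  exact ⟨i', hp⟩

theorem MaxIndepOn.exists_mem_below_mem (hW : MaxIndepOn (gridGraph m n) A W)
    (hA : IsStaircase A) {k i : Fin m} {c : Fin n} (hki : k < i) (hk : (k, c) ∈ A)
    (hi : (i, c) ∈ A) : ∃ c', (i, c') ∈ W ∧ ∃ k' < i, (k', c') ∈ W := by
  obtain ⟨e₀, he₀⟩ := hW.exists_mem_row hA hi
  obtain ⟨e, heW, he_le⟩ := exists_min_image {c | (i, c) ∈ W} id (toFinite _) ⟨e₀, he₀⟩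
  obtain ⟨d₀, hd₀⟩ := hW.exists_mem_row hA hk
  obtain ⟨⟨k', d⟩, ⟨hk'd, hk'i⟩, hlast⟩ :=
    exists_max_image {p ∈ W | p.1 < i} toLex (toFinite _) ⟨(k, d₀), hd₀, hki⟩
  have hbefore : ∀ q ∈ W, q.1 < i → q.1 ≤ k' ∧ q.2 ≤ d := by
    intro q hq hqi
    rcases Prod.Lex.toLex_le_toLex.1 (hlast q ⟨hq, hqi⟩) with h | ⟨h, h'⟩
    · exact ⟨h.le, hW.1.snd_le_of_fst_lt hq hk'd h⟩
    · exact ⟨h.le, h'⟩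
  have hde : d ≤ e := hW.1.snd_le_of_fst_lt hk'd heW hk'i
  -- `(k', d)` and `(i, e)` are consecutive in the chain `W`: each cell of `A` between them is free.
  have hbox : ∀ r x, (r, x) ∈ A → k' ≤ r → r ≤ i → d ≤ x → x ≤ e → (r, x) ∈ W := by
    intro r x hrx hk'r hri hdx hxe
    refine hW.mem_of_forall_not_adj hrx ?_
    rintro ⟨j, y⟩ hjy (⟨hrj, hyx⟩ | ⟨hjr, hxy⟩)
    · rcases lt_trichotomy j i with hji | rfl | hij
      · exact (hbefore _ hjy hji).1.not_gt (hk'r.trans_lt hrj)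
      · exact (he_le y hjy).not_gt (hyx.trans_le hxe)
      · exact (hW.1.snd_le_of_fst_lt heW hjy hij).not_gt (hyx.trans_le hxe)
    · exact (hbefore _ hjy (hjr.trans_le hri)).2.not_gt (hdx.trans_lt hxy)
  rcases hde.eq_or_lt with rfl | hde
  · exact ⟨d, heW, k', hk'i, hk'd⟩
  -- The column `c`, shared by rows `k ≤ k'` and `i`, meets the box between the two corners.
  exfalso
  rcases le_or_gt c d with hcd | hdc
  · have hidA : (i, d) ∈ A := hA (hW.1.1 hk'd) hi hk'i.le le_rfl hcd le_rfl
    exact (he_le d (hbox i d hidA hk'i.le le_rfl le_rfl hde.le)).not_gt hde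
  · have hiA : (i, min c e) ∈ A := by
      rcases min_choice c e with h | h <;> rw [h]
      exacts [hi, hW.1.1 heW]
    have hk'A : (k', min c e) ∈ A :=
      hA hk hiA (hbefore _ hd₀ hki).1 hk'i.le le_rfl (min_le_left c e)
    have hk'W := hbox k' _ hk'A le_rfl hk'i.le (le_min hdc.le hde.le) (min_le_right c e)
    exact (hbefore _ hk'W hk'i).2.not_gt (lt_min hdc hde)

def overlapRows (A : Set (Fin m × Fin n)) : Set (Fin m) :=
  {i | ∃ k < i, ∃ c, (k, c) ∈ A ∧ (i, c) ∈ A}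

theorem MaxIndepOn.ncard_eq (hW : MaxIndepOn (gridGraph m n) A W) (hA : IsStaircase A) :
    W.ncard = (Prod.snd '' A).ncard + (overlapRows A).ncard := by
  set B := {p ∈ W | ∃ k < p.1, (k, p.2) ∈ W}
  have hfirst : BijOn Prod.snd (W \ B) (Prod.snd '' A) := by
    refine ⟨fun p hp => mem_image_of_mem _ (hW.1.1 hp.1), ?_, ?_⟩
    · rintro ⟨i, c⟩ ⟨hp, hpB⟩ ⟨i', c'⟩ ⟨hq, hqB⟩ (rfl : c = c')
      rcases lt_trichotomy i i' with h | rfl | h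
      · exact (hqB ⟨hq, i, h, hp⟩).elim
      · rfl
      · exact (hpB ⟨hp, i', h, hq⟩).elim
    · rintro j ⟨⟨i, j⟩, hij, rfl⟩
      obtain ⟨i', hi'⟩ := hW.exists_mem_col hA hij
      obtain ⟨i₀, hi₀, hi₀_le⟩ := exists_min_image {i | (i, j) ∈ W} id (toFinite _) ⟨i', hi'⟩
      exact ⟨(i₀, j), ⟨hi₀, fun ⟨_, k, hk, hkW⟩ => (hi₀_le k hkW).not_gt hk⟩, rfl⟩
  have hrest : BijOn Prod.fst B (overlapRows A) := by
    refine ⟨?_, ?_, ?_⟩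
    · rintro ⟨i, c⟩ ⟨hp, k, hk, hkW⟩
      exact ⟨k, hk, c, hW.1.1 hkW, hW.1.1 hp⟩
    · rintro ⟨i, c⟩ ⟨hp, k, hk, hkW⟩ ⟨i', c'⟩ ⟨hq, k', hk', hk'W⟩ (rfl : i = i')
      rcases lt_trichotomy c c' with h | rfl | h
      · exact (hW.1.2 _ hk'W _ hp (Or.inl ⟨hk', h⟩)).elim
      · rfl
      · exact (hW.1.2 _ hkW _ hq (Or.inl ⟨hk, h⟩)).elim
    · rintro i ⟨k, hk, c, hkc, hic⟩
      obtain ⟨c', hic', k', hk', hk'W⟩ := hW.exists_mem_below_mem hA hk hkc hic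
      exact ⟨(i, c'), ⟨hic', k', hk', hk'W⟩, rfl⟩
  rw [← ncard_sdiff_add_ncard_of_subset (sep_subset W _), hfirst.ncard_eq, hrest.ncard_eq]

end Staircase

/- Rows and columns are indexed from `0`, while `a` and `b` keep the 1-based indexing of the
paper: the vertex `x_{i,j}` is the pair `(i - 1, j - 1)`. -/
theorem stmt8_general (m n : ℕ)
    (a b : ℕ → ℕ)
    (hamono : ∀ i, 1 ≤ i → i < m → a i ≤ a (i + 1))
    (hbmono : ∀ i, 1 ≤ i → i < m → b i ≤ b (i + 1))
    (A : Set (Fin m × Fin n))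
    (hA : A = {p : Fin m × Fin n |
      a (p.1.1 + 1) < p.2.1 + 1 ∧ p.2.1 + 1 < b (p.1.1 + 1)})
    (W W' : Set (Fin m × Fin n))
    (hW : MaxIndepOn (gridGraph m n) A W)
    (hW' : MaxIndepOn (gridGraph m n) A W') :
    W.ncard = W'.ncard := by
  have hstair : IsStaircase A := hA ▸ isStaircase_setOf
    (monotoneOn_Icc_of_le_add_one hamono) (monotoneOn_Icc_of_le_add_one hbmono)
  rw [hW.ncard_eq hstair, hW'.ncard_eq hstair]

/-- every down-left graph `G(m,n,a,b)` is well-covered. -/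
theorem stmt8 (m n : ℕ) (hm : 1 ≤ m) (hmn : m ≤ n)
    (a b : ℕ → ℕ)
    (ha1 : a 1 = 0)
    (hamono : ∀ i, 1 ≤ i → i < m → a i ≤ a (i + 1))
    (ham : a m < n)
    (hb1 : 1 < b 1)
    (hbmono : ∀ i, 1 ≤ i → i < m → b i ≤ b (i + 1))
    (hbm : b m = n + 1)
    (hab : ∀ i, 2 ≤ i → i ≤ m - 1 → a i < b i)
    (A : Set (Fin m × Fin n))
    (hA : A = {p : Fin m × Fin n |
      a (p.1.1 + 1) < p.2.1 + 1 ∧ p.2.1 + 1 < b (p.1.1 + 1)})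
    (W W' : Set (Fin m × Fin n))
    (hW : MaxIndepOn (gridGraph m n) A W)
    (hW' : MaxIndepOn (gridGraph m n) A W') :
    W.ncard = W'.ncard :=
  stmt8_general m n a b hamono hbmono A hA W W' hW hW'
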